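/- Let P be a g-weakly 2-absorbing ideal of a G-graded ring R and suppose x R_e y K_g ⊆ P for some x, y ∈ R_g and some graded left ideal K of R, where (x, y, z) is not a g-triple-zero of P for every z ∈ K_g. If xy ∉ P, then x K_g ⊆ P or y K_g ⊆ P. -/
import Mathlib


variable {G R : Type*} [AddGroup G] [DecidableEq G] [Ring R]

/-- A two-sided ideal is graded if it contains all homogeneous components of its elements. -/
def IsGradedIdeal (𝒜 : G → AddSubgroup R) [GradedRing 𝒜] (P : TwoSidedIdeal R) : Prop :=
  ∀ a ∈ P, ∀ g : G, (DirectSum.decompose 𝒜 a g : R) ∈ P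

/-- `P` is a `g`-2-absorbing ideal: `P` is a graded ideal with `P_g ≠ R_g`, and for
`x, y, z ∈ R_g`, `x R_e y R_e z ⊆ P` implies `xy ∈ P` or `yz ∈ P` or `xz ∈ P`. -/
def IsG2Absorbing (𝒜 : G → AddSubgroup R) [GradedRing 𝒜] (g : G) (P : TwoSidedIdeal R) : Prop :=
  IsGradedIdeal 𝒜 P ∧ (∃ x ∈ 𝒜 g, x ∉ P) ∧
    ∀ x y z : R, x ∈ 𝒜 g → y ∈ 𝒜 g → z ∈ 𝒜 g →
      (∀ r s : R, r ∈ 𝒜 0 → s ∈ 𝒜 0 → x * r * y * s * z ∈ P) →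
      x * y ∈ P ∨ y * z ∈ P ∨ x * z ∈ P

/-- `P` is a `g`-weakly 2-absorbing ideal: `P` is a graded ideal with `P_g ≠ R_g`, and for
`x, y, z ∈ R_g`, `0 ≠ x R_e y R_e z ⊆ P` implies `xy ∈ P` or `yz ∈ P` or `xz ∈ P`. -/
def IsGWeakly2Absorbing (𝒜 : G → AddSubgroup R) [GradedRing 𝒜] (g : G)
    (P : TwoSidedIdeal R) : Prop :=
  IsGradedIdeal 𝒜 P ∧ (∃ x ∈ 𝒜 g, x ∉ P) ∧
    ∀ x y z : R, x ∈ 𝒜 g → y ∈ 𝒜 g → z ∈ 𝒜 g →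
      (∃ r s : R, r ∈ 𝒜 0 ∧ s ∈ 𝒜 0 ∧ x * r * y * s * z ≠ 0) →
      (∀ r s : R, r ∈ 𝒜 0 → s ∈ 𝒜 0 → x * r * y * s * z ∈ P) →
      x * y ∈ P ∨ y * z ∈ P ∨ x * z ∈ P

/-- `(x, y, z)` is a `g`-triple-zero of `P`: `x, y, z ∈ R_g`, `x R_e y R_e z = 0`,
`xy ∉ P`, `yz ∉ P` and `xz ∉ P`. -/
def IsGTripleZero (𝒜 : G → AddSubgroup R) (g : G) (P : TwoSidedIdeal R) (x y z : R) : Prop :=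
  x ∈ 𝒜 g ∧ y ∈ 𝒜 g ∧ z ∈ 𝒜 g ∧
    (∀ r s : R, r ∈ 𝒜 0 → s ∈ 𝒜 0 → x * r * y * s * z = 0) ∧
    x * y ∉ P ∧ y * z ∉ P ∧ x * z ∉ P

/-- Proposition 4.12: if `P` is `g`-weakly 2-absorbing, `x R_e y K_g ⊆ P` for `x, y ∈ R_g`
and a graded left ideal `K`, `(x, y, z)` is not a `g`-triple-zero for every `z ∈ K_g`, and
`xy ∉ P`, then `x K_g ⊆ P` or `y K_g ⊆ P`. -/
theorem stmt10 (𝒜 : G → AddSubgroup R) [GradedRing 𝒜] (g : G) (P : TwoSidedIdeal R)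
    (hP : IsGWeakly2Absorbing 𝒜 g P) (x y : R) (hx : x ∈ 𝒜 g) (hy : y ∈ 𝒜 g)
    (K : Ideal R) (hKgr : ∀ a ∈ K, ∀ h : G, (DirectSum.decompose 𝒜 a h : R) ∈ K)
    (hsub : ∀ r : R, r ∈ 𝒜 0 → ∀ k ∈ K, k ∈ 𝒜 g → x * r * y * k ∈ P)
    (htz : ∀ z ∈ K, z ∈ 𝒜 g → ¬ IsGTripleZero 𝒜 g P x y z)
    (hxy : x * y ∉ P) :
    (∀ k ∈ K, k ∈ 𝒜 g → x * k ∈ P) ∨ (∀ k ∈ K, k ∈ 𝒜 g → y * k ∈ P) := by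
  have key : ∀ z ∈ K, z ∈ 𝒜 g → x * z ∈ P ∨ y * z ∈ P := by
    intro z hzK hzg
    have hall : ∀ r s : R, r ∈ 𝒜 0 → s ∈ 𝒜 0 → x * r * y * s * z ∈ P := by
      intro r s hr hs
      have hsz : s * z ∈ K := K.mul_mem_left s hzK
      have hszg : s * z ∈ 𝒜 g := by
        have := SetLike.mul_mem_graded hs hzg
        rwa [zero_add] at this
      have := hsub r hr (s * z) hsz hszg
      rwa [← mul_assoc] at this
    by_cases hnz : ∃ r s : R, r ∈ 𝒜 0 ∧ s ∈ 𝒜 0 ∧ x * r * y * s * z ≠ 0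
    · rcases hP.2.2 x y z hx hy hzg hnz hall with h | h | h
      · exact absurd h hxy
      · exact Or.inr h
      · exact Or.inl h
    · push_neg at hnz
      by_contra hc
      push_neg at hc
      exact htz z hzK hzg ⟨hx, hy, hzg, fun r s hr hs => hnz r s hr hs, hxy, hc.2, hc.1⟩
  by_contra hc
  push_neg at hc
  obtain ⟨⟨k₁, hk₁K, hk₁g, hxk₁⟩, ⟨k₂, hk₂K, hk₂g, hyk₂⟩⟩ := hc
  have hyk₁ : y * k₁ ∈ P := (key k₁ hk₁K hk₁g).resolve_left hxk₁
  have hxk₂ : x * k₂ ∈ P := (key k₂ hk₂K hk₂g).resolve_right hyk₂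
  have hsum : k₁ + k₂ ∈ K := K.add_mem hk₁K hk₂K
  have hsumg : k₁ + k₂ ∈ 𝒜 g := (𝒜 g).add_mem hk₁g hk₂g
  rcases key _ hsum hsumg with h | h
  · rw [mul_add] at h
    exact hxk₁ (by simpa using P.sub_mem h hxk₂)
  · rw [mul_add] at h
    exact hyk₂ (by simpa using P.sub_mem h hyk₁)
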